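/- Let a, b ∈ ℝ with a ≠ 0, β > 0, γ the Euler–Mascheroni constant, and (ξ_n)_{n≥0} i.i.d. standard normal. Define x_n as in the iterative scheme: x_0 = 0, l_0 = 0, x_{n+1} = b/a + ξ_n/(2^{l_n}√2 a β), with l_{n+1} ∈ ℤ satisfying 2^{l_{n+1}}|b - a x_{n+1}| ∈ (1/2, 1]. If s > 2β e^{γ/2}, then s^n |x_n - b/a| → +∞ almost surely. -/

import Mathlib

open MeasureTheory ProbabilityTheory Filter Set Real
open scoped NNReal Topology

/-!
Write `e n = |x n - b / a|` and `c = √2 β`. The choice of `l` gives `2 ^ l n * |a| * e n ≤ 1`, so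
`e (n + 1) = |ξ n| / (2 ^ l n * |a| * c) ≥ e n * |ξ n| / c` and hence
`|a| * e (n + 1) ≥ ∏_{k ≤ n} |ξ k| / c`. By the strong law of large numbers the geometric mean of
the `|ξ k|` tends to `exp 𝔼[log |ξ|] = exp (-(γ + log 2) / 2)`, a value read off from
`Γ'(1/2) = -√π (γ + 2 log 2)`. So `s ^ n * e n` grows like `(s / (2 β e^{γ/2})) ^ n`.
-/

theorem Complex.hasDerivAt_Gamma_of_re_pos {s : ℂ} (hs : 0 < s.re) :
    HasDerivAt Gamma (∫ t : ℝ in Ioi 0, t ^ (s - 1) * (Real.log t * Real.exp (-t))) s := by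
  refine (hasDerivAt_GammaIntegral hs).congr_of_eventuallyEq ?_
  filter_upwards [(isOpen_lt continuous_const continuous_re).mem_nhds hs] with z hz
  exact Gamma_eq_integral hz

theorem integral_rpow_neg_half_mul_log_mul_exp_neg :
    ∫ t in Ioi (0 : ℝ), t ^ (-(1 / 2) : ℝ) * (log t * exp (-t))
      = -√π * (eulerMascheroniConstant + 2 * log 2) := by
  have hderiv := (Complex.hasDerivAt_Gamma_of_re_pos (s := 1 / 2) (by norm_num)).unique
    Complex.hasDerivAt_Gamma_one_half
  have hcast : ∫ t : ℝ in Ioi 0, (t : ℂ) ^ ((1 / 2 : ℂ) - 1) * (Real.log t * Real.exp (-t))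
      = ((∫ t in Ioi (0 : ℝ), t ^ (-(1 / 2) : ℝ) * (log t * exp (-t)) : ℝ) : ℂ) := by
    refine (setIntegral_congr_fun measurableSet_Ioi fun t ht => ?_).trans integral_ofReal
    rw [show (1 / 2 - 1 : ℂ) = ((-(1 / 2) : ℝ) : ℂ) by norm_num,
      ← Complex.ofReal_cpow (le_of_lt ht)]
    norm_cast
  rw [hcast, ← Complex.ofReal_ofNat, ← Complex.ofReal_log zero_le_two] at hderiv
  exact_mod_cast hderiv

theorem integral_log_mul_exp_neg_sq :
    ∫ x in Ioi (0 : ℝ), log x * exp (-x ^ 2)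
      = -√π * (eulerMascheroniConstant + 2 * log 2) / 4 := by
  have h := integral_comp_rpow_Ioi
    (fun t => t ^ (-(1 / 2) : ℝ) * (log t * exp (-t))) two_ne_zero
  rw [integral_rpow_neg_half_mul_log_mul_exp_neg] at h
  rw [← h, eq_div_iff four_ne_zero, ← integral_mul_const]
  refine setIntegral_congr_fun measurableSet_Ioi fun x hx => ?_
  have hx : 0 < x := hx
  simp only [smul_eq_mul]
  rw [← rpow_mul hx.le, log_rpow hx, rpow_two]
  norm_num
  rw [rpow_neg_one]
  field_simp
  ring

theorem abs_log_le_self_add_two_mul_rpow_neg_half {x : ℝ} (hx : 0 < x) :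
    |log x| ≤ x + 2 * x ^ (-(1 / 2) : ℝ) := by
  have hrpow : 0 ≤ x ^ (-(1 / 2) : ℝ) := rpow_nonneg hx.le _
  rcases le_or_gt 1 x with h1 | h1
  · rw [abs_of_nonneg (log_nonneg h1)]
    linarith [log_le_sub_one_of_pos hx]
  · rw [abs_of_nonpos (log_nonpos hx.le h1.le)]
    have h := log_le_sub_one_of_pos (rpow_pos_of_pos hx (-(1 / 2) : ℝ))
    rw [log_rpow hx] at h
    linarith

theorem integrableOn_log_mul_exp_neg_mul_sq {c : ℝ} (hc : 0 < c) :
    IntegrableOn (fun x => log x * exp (-c * x ^ 2)) (Ioi 0) := by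
  refine Integrable.mono'
    ((integrableOn_rpow_mul_exp_neg_mul_sq hc (s := 1) (by norm_num)).add
      ((integrableOn_rpow_mul_exp_neg_mul_sq hc (s := -(1 / 2)) (by norm_num)).const_mul 2))
    (by fun_prop) ?_
  filter_upwards [ae_restrict_mem measurableSet_Ioi] with x hx
  rw [norm_mul, norm_eq_abs, norm_of_nonneg (exp_pos _).le, Pi.add_apply, rpow_one]
  linarith [mul_le_mul_of_nonneg_right (abs_log_le_self_add_two_mul_rpow_neg_half hx)
    (exp_pos (-c * x ^ 2)).le]

theorem integral_log_mul_exp_neg_mul_sq {c : ℝ} (hc : 0 < c) :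
    ∫ x in Ioi (0 : ℝ), log x * exp (-c * x ^ 2)
      = -√(π / c) * (eulerMascheroniConstant + 2 * log 2 + log c) / 4 := by
  have hsc : 0 < √c := sqrt_pos.mpr hc
  have h := integral_comp_mul_left_Ioi (fun x => log x * exp (-x ^ 2)) 0 hsc
  rw [mul_zero, integral_log_mul_exp_neg_sq] at h
  have hsplit : ∀ x ∈ Ioi (0 : ℝ), log (√c * x) * exp (-(√c * x) ^ 2)
      = log √c * exp (-c * x ^ 2) + log x * exp (-c * x ^ 2) := by
    intro x hx
    rw [log_mul hsc.ne' (ne_of_gt hx), mul_pow, sq_sqrt hc.le]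
    ring_nf
  rw [setIntegral_congr_fun measurableSet_Ioi hsplit, integral_add
    ((integrable_exp_neg_mul_sq hc).integrableOn.const_mul _)
    (integrableOn_log_mul_exp_neg_mul_sq hc), integral_const_mul, integral_gaussian_Ioi,
    log_sqrt hc.le, sqrt_div' _ hc.le, smul_eq_mul] at h
  rw [sqrt_div' _ hc.le]
  field_simp at h ⊢
  linear_combination h / 4

theorem integrable_comp_abs_of_integrableOn_Ioi {E : Type*} [NormedAddCommGroup E] {f : ℝ → E}
    (hf : IntegrableOn f (Ioi 0)) : Integrable (fun x => f |x|) := by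
  have hIoi : IntegrableOn (fun x => f |x|) (Ioi 0) :=
    hf.congr_fun (fun x hx => by rw [abs_of_pos hx]) measurableSet_Ioi
  rw [← integrableOn_univ, ← Iio_union_Ici (a := (0 : ℝ)), integrableOn_union,
    integrableOn_Ici_iff_integrableOn_Ioi]
  refine ⟨?_, hIoi⟩
  rw [← (Measure.measurePreserving_neg (volume : Measure ℝ)).integrableOn_comp_preimage
    (Homeomorph.neg ℝ).measurableEmbedding]
  simpa only [Function.comp_def, neg_preimage, neg_Iio, neg_zero, abs_neg] using hIoi

theorem gaussianPDFReal_zero_eq (v : ℝ≥0) (x : ℝ) :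
    gaussianPDFReal 0 v x = (√(2 * π * v))⁻¹ * exp (-(2 * (v : ℝ))⁻¹ * |x| ^ 2) := by
  rw [gaussianPDFReal, sub_zero, sq_abs, neg_div, div_eq_inv_mul, neg_mul]

theorem integrable_log_abs_gaussianReal {v : ℝ≥0} (hv : v ≠ 0) :
    Integrable (fun x => log |x|) (gaussianReal 0 v) := by
  have hc : 0 < (2 * v : ℝ)⁻¹ := by positivity
  rw [gaussianReal_of_var_ne_zero 0 hv, integrable_withDensity_iff (measurable_gaussianPDF _ _)
    (ae_of_all _ fun _ => ENNReal.ofReal_lt_top)]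
  refine ((integrable_comp_abs_of_integrableOn_Ioi
    (integrableOn_log_mul_exp_neg_mul_sq hc)).const_mul (√(2 * π * v))⁻¹).congr
    (ae_of_all _ fun x => ?_)
  beta_reduce
  rw [gaussianPDF_def, ENNReal.toReal_ofReal (gaussianPDFReal_nonneg 0 v x),
    gaussianPDFReal_zero_eq]
  ring

theorem integral_log_abs_gaussianReal {v : ℝ≥0} (hv : v ≠ 0) :
    ∫ x, log |x| ∂(gaussianReal 0 v) = (log v - eulerMascheroniConstant - log 2) / 2 := by
  have hv' : (0 : ℝ) < v := by positivity
  have hc : 0 < (2 * v : ℝ)⁻¹ := by positivity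
  simp only [integral_gaussianReal_eq_integral_smul hv, gaussianPDFReal_zero_eq, smul_eq_mul,
    mul_assoc, integral_const_mul]
  rw [integral_comp_abs (f := fun y => exp (-(2 * (v : ℝ))⁻¹ * y ^ 2) * log y)]
  simp only [mul_comm (exp _) (log _)]
  rw [integral_log_mul_exp_neg_mul_sq hc]
  have hsqrt : √(π / (2 * (v : ℝ))⁻¹) = √(2 * (π * v)) := by
    rw [div_inv_eq_mul]; ring_nf
  rw [hsqrt, log_inv, log_mul two_ne_zero hv'.ne']
  field_simp
  ring

section Iteration

variable {a b β : ℝ} {ξ x : ℕ → ℝ} {l : ℕ → ℤ}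

theorem abs_iterate_sub_eq (hβ : 0 < β)
    (hx : ∀ n, x (n + 1) = b / a + ξ n / ((2 : ℝ) ^ l n * √2 * a * β)) (n : ℕ) :
    |x (n + 1) - b / a| = |ξ n| / ((2 : ℝ) ^ l n * (|a| * (√2 * β))) := by
  rw [hx, add_sub_cancel_left, abs_div, abs_mul, abs_mul, abs_mul,
    abs_of_pos (zpow_pos two_pos (l n) : (0 : ℝ) < 2 ^ l n), abs_of_pos (sqrt_pos.mpr two_pos),
    abs_of_pos hβ]
  ring_nf

theorem zpow_mul_abs_iterate_sub_le_one (ha : a ≠ 0)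
    (hl : ∀ n, b - a * x (n + 1) ≠ 0 → (2 : ℝ) ^ l (n + 1) * |b - a * x (n + 1)| ∈ Ioc (1 / 2) 1)
    (n : ℕ) : (2 : ℝ) ^ l (n + 1) * (|a| * |x (n + 1) - b / a|) ≤ 1 := by
  have hdist : |b - a * x (n + 1)| = |a| * |x (n + 1) - b / a| := by
    rw [← abs_mul, ← abs_neg, mul_sub, mul_div_cancel₀ _ ha, neg_sub]
  rw [← hdist]
  by_cases h : b - a * x (n + 1) = 0
  · simp [h]
  · exact (hl n h).2

theorem prod_le_abs_mul_abs_iterate_sub (ha : a ≠ 0) (hβ : 0 < β) (hl0 : l 0 = 0)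
    (hx : ∀ n, x (n + 1) = b / a + ξ n / ((2 : ℝ) ^ l n * √2 * a * β))
    (hl : ∀ n, b - a * x (n + 1) ≠ 0 → (2 : ℝ) ^ l (n + 1) * |b - a * x (n + 1)| ∈ Ioc (1 / 2) 1)
    (n : ℕ) : ∏ k ∈ Finset.range (n + 1), |ξ k| / (√2 * β) ≤ |a| * |x (n + 1) - b / a| := by
  have ha' : 0 < |a| := abs_pos.mpr ha
  induction n with
  | zero =>
    rw [Finset.prod_range_one, abs_iterate_sub_eq hβ hx, hl0, zpow_zero, one_mul,
      ← mul_div_assoc, mul_div_mul_left _ _ ha'.ne']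
  | succ n ih =>
    have hbound := zpow_mul_abs_iterate_sub_le_one ha hl n
    have hpow : (0 : ℝ) < 2 ^ l (n + 1) := zpow_pos two_pos _
    rw [Finset.prod_range_succ, abs_iterate_sub_eq hβ hx (n + 1)]
    calc (∏ k ∈ Finset.range (n + 1), |ξ k| / (√2 * β)) * (|ξ (n + 1)| / (√2 * β))
        ≤ |a| * |x (n + 1) - b / a| * (|ξ (n + 1)| / (√2 * β)) := by gcongr
      _ ≤ ((2 : ℝ) ^ l (n + 1))⁻¹ * (|ξ (n + 1)| / (√2 * β)) := by
        gcongr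
        rw [inv_eq_one_div, le_div_iff₀ hpow]
        linarith
      _ = |a| * (|ξ (n + 1)| / (2 ^ l (n + 1) * (|a| * (√2 * β)))) := by
        field_simp

end Iteration

theorem ae_tendsto_avg_comp_of_map_eq {Ω E : Type*} {mΩ : MeasurableSpace Ω} {μ : Measure Ω}
    [MeasurableSpace E] {ν : Measure E} {ξ : ℕ → Ω → E} {g : E → ℝ} (hg : Measurable g)
    (hint : Integrable g ν) (hmeas : ∀ n, Measurable (ξ n))
    (hindep : Pairwise fun i j => IndepFun (ξ i) (ξ j) μ) (hlaw : ∀ n, μ.map (ξ n) = ν) :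
    ∀ᵐ ω ∂μ, Tendsto (fun n : ℕ => (∑ k ∈ Finset.range n, g (ξ k ω)) / n) atTop
      (𝓝 (∫ y, g y ∂ν)) := by
  have hident : ∀ n, IdentDistrib (ξ n) (ξ 0) μ μ := fun n =>
    ⟨(hmeas n).aemeasurable, (hmeas 0).aemeasurable, by rw [hlaw, hlaw]⟩
  have hmean : ∫ ω, g (ξ 0 ω) ∂μ = ∫ y, g y ∂ν := by
    rw [← hlaw 0, integral_map (hmeas 0).aemeasurable hg.aestronglyMeasurable]
  rw [← hmean]
  refine strong_law_ae_real (fun n ω => g (ξ n ω)) ?_ (fun i j hij => (hindep hij).comp hg hg)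
    (fun n => (hident n).comp hg)
  rw [← hlaw 0] at hint
  exact (integrable_map_measure hg.aestronglyMeasurable (hmeas 0).aemeasurable).mp hint

theorem ae_forall_ne_zero_of_map_eq_gaussianReal {Ω : Type*} {mΩ : MeasurableSpace Ω}
    {μ : Measure Ω} {ξ : ℕ → Ω → ℝ} {m : ℝ} {v : ℝ≥0} (hv : v ≠ 0)
    (hmeas : ∀ n, Measurable (ξ n)) (hlaw : ∀ n, μ.map (ξ n) = gaussianReal m v) :
    ∀ᵐ ω ∂μ, ∀ n, ξ n ω ≠ 0 := by
  refine ae_all_iff.mpr fun n => ?_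
  have h := gaussianReal_absolutelyContinuous m hv (measure_singleton 0)
  rw [← hlaw n, Measure.map_apply (hmeas n) (measurableSet_singleton 0)] at h
  exact measure_eq_zero_iff_ae_notMem.mp h

theorem tendsto_pow_mul_prod_atTop {r : ℕ → ℝ} {q L : ℝ} (hq : 0 < q) (hr : ∀ k, 0 < r k)
    (havg : Tendsto (fun n : ℕ => (∑ k ∈ Finset.range n, log (r k)) / n) atTop (𝓝 L))
    (hL : 0 < log q + L) :
    Tendsto (fun n : ℕ => q ^ n * ∏ k ∈ Finset.range n, r k) atTop atTop := by
  have hlin : Tendsto (fun n : ℕ => n * (log q + (∑ k ∈ Finset.range n, log (r k)) / n))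
      atTop atTop :=
    tendsto_natCast_atTop_atTop.atTop_mul_pos hL (havg.const_add _)
  refine (tendsto_exp_atTop.comp hlin).congr' ?_
  filter_upwards [eventually_ne_atTop 0] with n hn
  rw [Function.comp_apply, mul_add, mul_div_cancel₀ _ (Nat.cast_ne_zero.mpr hn), exp_add,
    exp_sum, ← log_pow, exp_log (pow_pos hq n)]
  simp only [exp_log (hr _)]

theorem log_div_sqrt_two_mul_sub_pos {β s : ℝ} (hβ : 0 < β)
    (hs : 2 * β * exp (eulerMascheroniConstant / 2) < s) :
    0 < log (s / (√2 * β)) + (-eulerMascheroniConstant - log 2) / 2 := by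
  have hs0 : 0 < s := lt_trans (by positivity) hs
  have hlog := log_lt_log (by positivity) hs
  rw [log_mul (by positivity) (exp_pos _).ne', log_mul two_ne_zero hβ.ne', log_exp] at hlog
  rw [log_div hs0.ne' (by positivity), log_mul (sqrt_pos.mpr two_pos).ne' hβ.ne',
    log_sqrt zero_le_two]
  linarith

theorem iterative_scheme_divergence_rate_general
    {Ω : Type*} [MeasureSpace Ω]
    (a b β s : ℝ) (ha : a ≠ 0) (hβ : 0 < β)
    (ξ : ℕ → Ω → ℝ) (hmeas : ∀ n, Measurable (ξ n))
    (hindep : iIndepFun ξ ℙ)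
    (hgauss : ∀ n, Measure.map (ξ n) ℙ = gaussianReal 0 1)
    (x : ℕ → Ω → ℝ) (l : ℕ → Ω → ℤ)
    (hl0 : ∀ ω, l 0 ω = 0)
    (hx : ∀ n ω, x (n + 1) ω = b / a + ξ n ω / ((2 : ℝ) ^ (l n ω) * Real.sqrt 2 * a * β))
    (hl : ∀ n ω, b - a * x (n + 1) ω ≠ 0 →
      (2 : ℝ) ^ (l (n + 1) ω) * |b - a * x (n + 1) ω| ∈ Set.Ioc (1 / 2 : ℝ) 1)
    (hs : 2 * β * Real.exp (Real.eulerMascheroniConstant / 2) < s) :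
    ∀ᵐ ω ∂ℙ, Tendsto (fun n => s ^ n * |x n ω - b / a|) atTop Filter.atTop := by
  have hslln := ae_tendsto_avg_comp_of_map_eq (g := fun y => log |y|)
    (measurable_log.comp measurable_abs) (integrable_log_abs_gaussianReal one_ne_zero) hmeas
    (fun i j hij => hindep.indepFun hij) hgauss
  filter_upwards [hslln, ae_forall_ne_zero_of_map_eq_gaussianReal one_ne_zero hmeas hgauss]
    with ω havg hne
  have hc : 0 < √2 * β := mul_pos (sqrt_pos.mpr two_pos) hβ
  have hs0 : 0 < s := lt_trans (by positivity) hs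
  rw [integral_log_abs_gaussianReal one_ne_zero, NNReal.coe_one, log_one, zero_sub] at havg
  have hprod := tendsto_pow_mul_prod_atTop (div_pos hs0 hc) (fun k => abs_pos.mpr (hne k))
    havg (log_div_sqrt_two_mul_sub_pos hβ hs)
  rw [← tendsto_add_atTop_iff_nat 1] at hprod ⊢
  refine tendsto_atTop_mono (fun n => ?_) (hprod.atTop_div_const (abs_pos.mpr ha))
  have hbound := prod_le_abs_mul_abs_iterate_sub (x := (x · ω)) (l := (l · ω)) ha hβ (hl0 ω)
    (hx · ω) (hl · ω) n
  rw [Finset.prod_div_distrib, Finset.prod_const, Finset.card_range] at hbound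
  calc (s / (√2 * β)) ^ (n + 1) * (∏ k ∈ Finset.range (n + 1), |ξ k ω|) / |a|
      = s ^ (n + 1) * ((∏ k ∈ Finset.range (n + 1), |ξ k ω|) / (√2 * β) ^ (n + 1)) / |a| := by
        ring
    _ ≤ s ^ (n + 1) * (|a| * |x (n + 1) ω - b / a|) / |a| := by gcongr
    _ = s ^ (n + 1) * |x (n + 1) ω - b / a| := by field_simp

/-- Upper bound on the convergence rate of the iterative algorithm:
if `s > 2β e^{γ/2}`, then `s^n |x_n - b/a| → +∞` almost surely. -/
theorem iterative_scheme_divergence_rate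
    {Ω : Type*} [MeasureSpace Ω] [IsProbabilityMeasure (ℙ : Measure Ω)]
    (a b β s : ℝ) (ha : a ≠ 0) (hβ : 0 < β)
    (ξ : ℕ → Ω → ℝ) (hmeas : ∀ n, Measurable (ξ n))
    (hindep : iIndepFun ξ ℙ)
    (hgauss : ∀ n, Measure.map (ξ n) ℙ = gaussianReal 0 1)
    (x : ℕ → Ω → ℝ) (l : ℕ → Ω → ℤ)
    (hx0 : ∀ ω, x 0 ω = 0) (hl0 : ∀ ω, l 0 ω = 0)
    (hx : ∀ n ω, x (n + 1) ω = b / a + ξ n ω / ((2 : ℝ) ^ (l n ω) * Real.sqrt 2 * a * β))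
    (hl : ∀ n ω, b - a * x (n + 1) ω ≠ 0 →
      (2 : ℝ) ^ (l (n + 1) ω) * |b - a * x (n + 1) ω| ∈ Set.Ioc (1 / 2 : ℝ) 1)
    (hs : 2 * β * Real.exp (Real.eulerMascheroniConstant / 2) < s) :
    ∀ᵐ ω ∂ℙ, Tendsto (fun n => s ^ n * |x n ω - b / a|) atTop Filter.atTop :=
  iterative_scheme_divergence_rate_general a b β s ha hβ ξ hmeas hindep hgauss x l hl0 hx hl hs
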